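/- arXiv:1612.00302 — 3 statements merged into one kernel-verified Lean document; each statement's English description precedes it below -/
import Mathlib

section
/- The K-algebra homomorphism φ : F → T^n(A)^{S_n} determined by T_w ↦ [w] for all w ∈ M is surjective. -/
open scoped TensorProduct
open PiTensorProduct

noncomputable section

variable (K : Type*) [Field K] (A : Type*) [CommRing A] [Algebra K A] (n : ℕ)

/-- The algebra endomorphism of the `n`-th tensor power of `A` permuting the tensor
factors according to the permutation `σ` (it sends `a₁ ⊗ ⋯ ⊗ aₙ` to the tensor whose
`σ i`-th slot is `aᵢ`). -/
def permAlgHom (σ : Equiv.Perm (Fin n)) :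
    (⨂[K] _ : Fin n, A) →ₐ[K] ⨂[K] _ : Fin n, A :=
  PiTensorProduct.liftAlgHom ((PiTensorProduct.tprod K).domDomCongr σ)
    (by rw [one_def]; rfl)
    (fun x y => by
      simp only [MultilinearMap.domDomCongr_apply]
      rw [show (fun i => (x * y) (σ i)) = (fun i => x (σ i)) * fun i => y (σ i) from rfl,
        ← tprod_mul_tprod])

/-- The subalgebra `Tⁿ(A)^{Sₙ}` of `Sₙ`-invariants in the `n`-th tensor power of `A`. -/
def symInvariants : Subalgebra K (⨂[K] _ : Fin n, A) :=
  ⨅ σ : Equiv.Perm (Fin n), AlgHom.equalizer (permAlgHom K A n σ) (AlgHom.id K _)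

/-- `[w] = w ⊗ 1 ⊗ ⋯ ⊗ 1 + 1 ⊗ w ⊗ 1 ⊗ ⋯ ⊗ 1 + ⋯ + 1 ⊗ ⋯ ⊗ 1 ⊗ w`. -/
def bracket (w : A) : ⨂[K] _ : Fin n, A :=
  ∑ i : Fin n, tprod K (Function.update (fun _ : Fin n => (1 : A)) i w)

/-!
For `a : Fin k → A` let `S(a) = ∑_{g : Fin k ↪ Fin n} ∏ᵢ [aᵢ]_{g i}`, where `[w]_j` is `w` placed
in the `j`-th tensor slot. Multiplying `S(a)` by `[b] = ∑_j [b]_j` either puts `b` into a free slot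
or multiplies it into an occupied one, so
`S(b, a) = [b] · S(a) - ∑ⱼ S(a₁, …, b aⱼ, …, aₖ)`.
By induction on `k` every `S(a)` is a polynomial in brackets, and brackets are linear, so it is
enough that `[1] = n` and `[w]` for `w ∈ M` lie in the range. For `k = n`, `S(a)` is the
symmetrization of `a₁ ⊗ ⋯ ⊗ aₙ`, and an invariant `x` is `(n!)⁻¹` times its symmetrization.
-/

open Finset

section EmbeddingSum

variable {ι S T : Type*} [Monoid S]

theorem prod_apply_update_mul [CommMonoid T] (x : ι → S →* T) {k : ℕ} (g : Fin k → ι)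
    (a : Fin k → S) (b : S) (j : Fin k) :
    ∏ i, x (g i) (Function.update a j (b * a j) i) = x (g j) b * ∏ i, x (g i) (a i) := by
  rw [← mul_prod_erase _ _ (mem_univ j), ← mul_prod_erase _ _ (mem_univ j),
    Function.update_self, map_mul, mul_assoc]
  congr 2
  refine prod_congr rfl fun i hi => ?_
  rw [Function.update_of_ne (ne_of_mem_erase hi)]

variable [Fintype ι]

def embeddingSum [CommSemiring T] (x : ι → S →* T) {k : ℕ} (a : Fin k → S) : T :=
  ∑ g : Fin k ↪ ι, ∏ i, x (g i) (a i)

theorem embeddingSum_fin_zero [CommSemiring T] (x : ι → S →* T) (a : Fin 0 → S) :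
    embeddingSum x a = 1 := by
  simp [embeddingSum]

variable [DecidableEq ι]

theorem mul_embeddingSum [CommSemiring T] (x : ι → S →* T) {k : ℕ} (b : S) (a : Fin k → S) :
    (∑ l, x l b) * embeddingSum x a =
      embeddingSum x (Fin.cons b a) + ∑ j, embeddingSum x (Function.update a j (b * a j)) := by
  have hcons : embeddingSum x (Fin.cons b a) =
      ∑ g : Fin k ↪ ι, ∑ l ∈ (univ.map g)ᶜ, x l b * ∏ i, x (g i) (a i) := by
    rw [embeddingSum, ← (Equiv.embeddingFinSucc k ι).symm.sum_comp, Fintype.sum_sigma]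
    refine Fintype.sum_congr _ _ fun g => ?_
    rw [sum_subtype _ (p := fun l => l ∉ Set.range g) (by simp)]
    refine Fintype.sum_congr _ _ fun l => ?_
    simp [Fin.prod_univ_succ]
  have hupdate : ∑ j, embeddingSum x (Function.update a j (b * a j)) =
      ∑ g : Fin k ↪ ι, ∑ l ∈ univ.map g, x l b * ∏ i, x (g i) (a i) := by
    simp only [embeddingSum, prod_apply_update_mul, sum_map]
    exact sum_comm
  rw [hcons, hupdate, ← sum_add_distrib, embeddingSum, mul_sum]
  refine Fintype.sum_congr _ _ fun g => ?_
  rw [sum_compl_add_sum, sum_mul]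

theorem embeddingSum_mem [CommRing T] (x : ι → S →* T) {R : Type*} [SetLike R T]
    [SubringClass R T] (r : R) (hr : ∀ b, ∑ l, x l b ∈ r) {k : ℕ} (a : Fin k → S) :
    embeddingSum x a ∈ r := by
  induction k with
  | zero => rw [embeddingSum_fin_zero]; exact one_mem r
  | succ k ih =>
    rw [← Fin.cons_self_tail a, eq_sub_of_add_eq (mul_embeddingSum x _ _).symm]
    exact sub_mem (mul_mem (hr _) (ih _)) (sum_mem fun j _ => ih _)

end EmbeddingSum

section Tensor

variable {K A n}

theorem bracket_eq_sum_singleAlgHom (w : A) :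
    bracket K A n w = ∑ i, singleAlgHom (R := K) (A := fun _ => A) i w :=
  rfl

theorem prod_singleAlgHom (v : Fin n → A) :
    ∏ i, singleAlgHom (R := K) (A := fun _ => A) i (v i) = tprod K v := by
  simp only [singleAlgHom_apply, MonoidHom.mulSingle_apply]
  exact (map_prod (tprodMonoidHom (R := K) (A := fun _ : Fin n => A)) _ _).symm.trans
    (congrArg _ (univ_prod_mulSingle v))

theorem permAlgHom_tprod (σ : Equiv.Perm (Fin n)) (v : Fin n → A) :
    permAlgHom K A n σ (tprod K v) = tprod K (v ∘ σ) := by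
  simp only [permAlgHom, liftAlgHom, AlgHom.ofLinearMap_apply, lift.tprod,
    MultilinearMap.domDomCongr_apply]
  rfl

theorem permAlgHom_singleAlgHom (σ : Equiv.Perm (Fin n)) (i : Fin n) (w : A) :
    permAlgHom K A n σ (singleAlgHom i w) = singleAlgHom (σ⁻¹ i) w := by
  simp only [singleAlgHom_apply, MonoidHom.mulSingle_apply, permAlgHom_tprod,
    Pi.mulSingle_comp_equiv]
  rfl

theorem permAlgHom_bracket (σ : Equiv.Perm (Fin n)) (w : A) :
    permAlgHom K A n σ (bracket K A n w) = bracket K A n w := by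
  simp only [bracket_eq_sum_singleAlgHom, map_sum, permAlgHom_singleAlgHom]
  exact Equiv.sum_comp σ⁻¹ fun i => singleAlgHom (R := K) (A := fun _ => A) i w

theorem range_aeval_bracket_le_symInvariants {ι : Type*} (f : ι → A) :
    (MvPolynomial.aeval fun i => bracket K A n (f i)).range ≤ symInvariants K A n := by
  rw [← Algebra.adjoin_range_eq_range_aeval, Algebra.adjoin_le_iff]
  rintro _ ⟨i, rfl⟩
  exact Algebra.mem_iInf.mpr fun σ => permAlgHom_bracket σ (f i)

variable (K A n) in
def symmetrize : (⨂[K] _ : Fin n, A) →ₗ[K] ⨂[K] _ : Fin n, A :=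
  ∑ σ : Equiv.Perm (Fin n), (permAlgHom K A n σ).toLinearMap

theorem symmetrize_apply (x : ⨂[K] _ : Fin n, A) :
    symmetrize K A n x = ∑ σ : Equiv.Perm (Fin n), permAlgHom K A n σ x :=
  LinearMap.sum_apply _ _ _

theorem symmetrize_of_mem_symInvariants {x : ⨂[K] _ : Fin n, A}
    (hx : x ∈ symInvariants K A n) : symmetrize K A n x = n.factorial • x := by
  have hfix : ∀ σ, permAlgHom K A n σ x = x := Algebra.mem_iInf.mp hx
  simp [symmetrize_apply, hfix, Fintype.card_perm]

theorem symmetrize_tprod (v : Fin n → A) :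
    symmetrize K A n (tprod K v) =
      embeddingSum (fun i => (singleAlgHom (R := K) (A := fun _ => A) i).toMonoidHom) v := by
  rw [symmetrize_apply, embeddingSum, ← (Equiv.embeddingEquivOfFinite (Fin n)).symm.sum_comp,
    ← Equiv.sum_comp (Equiv.inv (Equiv.Perm (Fin n)))]
  refine Fintype.sum_congr _ _ fun σ => ?_
  rw [permAlgHom_tprod, ← prod_singleAlgHom, ← Equiv.prod_comp σ]
  simp

theorem symmetrize_mem {R : Subalgebra K (⨂[K] _ : Fin n, A)}
    (hR : ∀ a, bracket K A n a ∈ R) (y : ⨂[K] _ : Fin n, A) : symmetrize K A n y ∈ R := by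
  induction y using PiTensorProduct.induction_on with
  | smul_tprod r v =>
    rw [map_smul, symmetrize_tprod]
    exact R.smul_mem (embeddingSum_mem _ R hR v) r
  | add y z hy hz => rw [map_add]; exact R.add_mem hy hz

theorem bracket_one : bracket K A n 1 = n := by
  simp only [bracket_eq_sum_singleAlgHom, map_one, sum_const, card_univ, Fintype.card_fin,
    nsmul_eq_mul, mul_one]

theorem bracket_mem_of_forall_basis_mem {ι : Type*} (b : Module.Basis ι K A)
    {R : Subalgebra K (⨂[K] _ : Fin n, A)} (hb : ∀ i, bracket K A n (b i) ∈ R) (a : A) :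
    bracket K A n a ∈ R := by
  let bracketₗ : A →ₗ[K] ⨂[K] _ : Fin n, A :=
    ∑ i, (singleAlgHom (R := K) (A := fun _ => A) i).toLinearMap
  have hbracketₗ : ∀ a, bracketₗ a = bracket K A n a := fun a => LinearMap.sum_apply _ _ _
  have hle : ⊤ ≤ (Subalgebra.toSubmodule R).comap bracketₗ := by
    rw [← b.span_eq, Submodule.span_le]
    rintro _ ⟨i, rfl⟩
    rw [SetLike.mem_coe, Submodule.mem_comap, hbracketₗ]
    exact hb i
  exact hbracketₗ a ▸ hle (Submodule.mem_top (x := a))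

end Tensor

theorem factorial_cast_ne_zero {R : Type*} [Semiring R] [NoZeroDivisors R] [Nontrivial R] {n : ℕ}
    (hchar : ringChar R = 0 ∨ n < ringChar R) : (n.factorial : R) ≠ 0 := by
  rw [ne_eq, ringChar.spec]
  rcases hchar with h | h
  · rw [h, zero_dvd_iff]
    exact n.factorial_ne_zero
  · have hp : (ringChar R).Prime :=
      (CharP.char_is_prime_or_zero R (ringChar R)).resolve_right (by omega)
    exact fun hdvd => h.not_ge (hp.dvd_factorial.mp hdvd)

theorem multisym_surjective
    (hchar : ringChar K = 0 ∨ n < ringChar K)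
    (M : Set A)
    (bA : Module.Basis (Option M) K A)
    (hb1 : bA none = 1) (hbM : ∀ w : M, bA (some w) = (w : A)) :
    (MvPolynomial.aeval (fun w : M => bracket K A n (w : A)) :
        MvPolynomial M K →ₐ[K] ⨂[K] _ : Fin n, A).range
      = symInvariants K A n := by
  refine le_antisymm (range_aeval_bracket_le_symInvariants _) fun x hx => ?_
  have hbracket : ∀ a, bracket K A n a ∈
      (MvPolynomial.aeval (R := K) fun w : M => bracket K A n (w : A)).range :=
    bracket_mem_of_forall_basis_mem bA fun
      | none => by rw [hb1, bracket_one]; exact natCast_mem _ n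
      | some w => by rw [hbM]; exact ⟨MvPolynomial.X w, MvPolynomial.aeval_X _ w⟩
  have hsym := symmetrize_mem hbracket x
  rwa [symmetrize_of_mem_symInvariants hx, ← Nat.cast_smul_eq_nsmul K,
    ← Subalgebra.mem_toSubmodule, Submodule.smul_mem_iff _ (factorial_cast_ne_zero hchar)] at hsym

end
end

section
/- For any n×n matrices Y(1),…,Y(n+1) over any commutative ring, Σ_{π ∈ S_{n+1}} sign(π)·Tr^π = 0 (the fundamental trace identity of n×n matrices). -/
/-!
Expanding traces of products of matrices into sums over index assignments gives
`Tr^π = ∑_{f : [n+1] → [n]} ∏_i Y(i)_{f(i), f(π i)}`: a cycle `(i₁ ⋯ i_d)` contributes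
`Tr(Y(i₁) ⋯ Y(i_d))`, and index sums over disjoint `π`-invariant sets multiply.
Hence `∑_π sign(π) Tr^π = ∑_f det (Y(j)_{f(j), f(i)})_{i j}`, and since `f` sends `n + 1`
indices to `n` values, each of these determinants has two equal rows.
-/

noncomputable section

variable {R : Type*} [CommRing R] {n : ℕ}

/-- For a cyclic permutation `c = (i₁ i₂ ⋯ i_d)` (written so that `i₁` is the smallest
element of its support and `i_{k+1} = c i_k`), the trace `Tr(Y(i₁) Y(i₂) ⋯ Y(i_d))` of the
product of the matrices `Y i` along the cycle.  (For the identity permutation, whose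
support is empty, the value is `1`; this case is never used below, since the factors of
a cycle decomposition have nonempty support.) -/
def cycleTrace (c : Equiv.Perm (Fin (n + 1))) (Y : Fin (n + 1) → Matrix (Fin n) (Fin n) R) :
    R :=
  if h : c.support.Nonempty then
    Matrix.trace
      (((List.range c.support.card).map fun k => Y ((c ^ k) (c.support.min' h))).prod)
  else 1

/-- `Tr^π = Tr(Y(i₁)⋯Y(i_d)) ⋯ Tr(Y(j₁)⋯Y(j_e))`, a product of traces, one factor for
each cycle of `π` (including one factor `Tr(Y s)` for each fixed point `s` of `π`,
i.e. each 1-cycle). -/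
def trPow (π : Equiv.Perm (Fin (n + 1))) (Y : Fin (n + 1) → Matrix (Fin n) (Fin n) R) :
    R :=
  (∏ c ∈ π.cycleFactorsFinset, cycleTrace c Y) * ∏ s ∈ π.supportᶜ, Matrix.trace (Y s)

open Finset

section

variable {β : Type*}

theorem Fin.snoc_self_zero_succ {d : ℕ} (g : Fin (d + 1) → β) (k : Fin (d + 1)) :
    (Fin.snoc g (g 0) : Fin (d + 2) → β) k.succ = g (k + 1) := by
  induction k using Fin.lastCases with
  | last => simp
  | cast i => rw [Fin.succ_castSucc, Fin.snoc_castSucc, Fin.coeSucc_eq_succ]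

variable [Fintype β] [DecidableEq β] {S : Type*} [CommSemiring S]

theorem Matrix.list_prod_map_range_apply (A : ℕ → Matrix β β S) (d : ℕ) (a b : β) :
    ((List.range d).map A).prod a b =
      ∑ p : Fin (d + 1) → β, if p 0 = a ∧ p (Fin.last d) = b then
        ∏ k : Fin d, A k (p k.castSucc) (p k.succ) else 0 := by
  induction d generalizing b with
  | zero =>
    rw [← (Equiv.funUnique (Fin 1) β).symm.sum_comp]
    simp [one_apply, ite_and, eq_comm]
  | succ d ih =>
    calc ((List.range (d + 1)).map A).prod a b
        = ∑ m, ((List.range d).map A).prod a m * A d m b := by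
          rw [List.range_succ, List.map_append, List.prod_append, List.map_singleton,
            List.prod_singleton, mul_apply]
      _ = ∑ p : Fin (d + 1) → β, if p 0 = a then
            (∏ k : Fin d, A k (p k.castSucc) (p k.succ)) * A d (p (Fin.last d)) b else 0 := by
          simp_rw [ih, sum_mul, ite_mul, zero_mul, ite_and]
          rw [sum_comm]
          simp
      _ = _ := by
          rw [eq_comm, ← (Fin.snocEquiv fun _ => β).sum_comp, Fintype.sum_prod_type,
            sum_comm]
          simp [Fin.prod_univ_castSucc, ite_and, Fin.succ_castSucc, -Fin.castSucc_succ]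

theorem Matrix.trace_list_prod_map_range (A : ℕ → Matrix β β S) (d : ℕ) :
    trace ((List.range (d + 1)).map A).prod =
      ∑ g : Fin (d + 1) → β, ∏ k : Fin (d + 1), A k (g k) (g (k + 1)) := by
  simp only [trace, diag, list_prod_map_range_apply]
  rw [sum_comm, ← (Fin.snocEquiv fun _ => β).sum_comp, Fintype.sum_prod_type,
    sum_comm]
  refine sum_congr rfl fun g _ => ?_
  simp [ite_and, Fin.snoc_self_zero_succ]

end

section

variable {α β ι S : Type*} [Fintype α] [DecidableEq α] [Fintype β] [DecidableEq β]

/-- Functions `s → β`, encoded as functions on `α` that equal `b₀` off `s`. -/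
def pinnedFuns (b₀ : β) (s : Finset α) : Finset (α → β) := {f | ∀ i ∉ s, f i = b₀}

@[simp]
theorem mem_pinnedFuns {b₀ : β} {s : Finset α} {f : α → β} :
    f ∈ pinnedFuns b₀ s ↔ ∀ i ∉ s, f i = b₀ := by
  simp [pinnedFuns]

theorem sum_pinnedFuns_union [AddCommMonoid S] (b₀ : β) {s t : Finset α} (hst : Disjoint s t)
    (F : (α → β) → S) :
    ∑ f ∈ pinnedFuns b₀ (s ∪ t), F f =
      ∑ g ∈ pinnedFuns b₀ s, ∑ h ∈ pinnedFuns b₀ t, F (s.piecewise g h) := by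
  have left_inv : ∀ f ∈ pinnedFuns b₀ (s ∪ t),
      s.piecewise (s.piecewise f fun _ => b₀) (t.piecewise f fun _ => b₀) = f := by
    intro f hf
    ext i
    simp_all [piecewise]
  rw [← sum_product']
  refine sum_nbij' (fun f => (s.piecewise f fun _ => b₀, t.piecewise f fun _ => b₀))
    (fun p => s.piecewise p.1 p.2) (fun f hf => by simp_all [piecewise])
    (fun p hp => by simp_all [piecewise]) left_inv (fun p hp => ?_)
    (fun f hf => by rw [left_inv f hf])
  simp only [mem_product, mem_pinnedFuns] at hp
  ext i
  · by_cases hi : i ∈ s <;> simp [hi, hp.1]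
  · by_cases hi : i ∈ t <;> simp [hi, hp.2, disjoint_right.mp hst]

theorem pinnedFuns_empty (b₀ : β) : pinnedFuns b₀ (∅ : Finset α) = {fun _ => b₀} := by
  ext f
  simp [funext_iff]

variable [CommSemiring S]

def traceAlong (b₀ : β) (Y : α → Matrix β β S) (σ : α → α) (s : Finset α) : S :=
  ∑ f ∈ pinnedFuns b₀ s, ∏ i ∈ s, Y i (f i) (f (σ i))

variable (b₀ : β) (Y : α → Matrix β β S)

theorem traceAlong_univ (σ : α → α) :
    traceAlong b₀ Y σ univ = ∑ f : α → β, ∏ i, Y i (f i) (f (σ i)) := by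
  simp [traceAlong, pinnedFuns]

theorem traceAlong_congr {σ τ : α → α} {s : Finset α} (h : ∀ i ∈ s, σ i = τ i) :
    traceAlong b₀ Y σ s = traceAlong b₀ Y τ s :=
  sum_congr rfl fun _ _ => prod_congr rfl fun i hi => by rw [h i hi]

theorem traceAlong_empty (σ : α → α) : traceAlong b₀ Y σ ∅ = 1 := by
  simp [traceAlong, pinnedFuns_empty]

theorem traceAlong_union {σ : α → α} {s t : Finset α} (hst : Disjoint s t)
    (hs : ∀ i ∈ s, σ i ∈ s) (ht : ∀ i ∈ t, σ i ∈ t) :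
    traceAlong b₀ Y σ (s ∪ t) = traceAlong b₀ Y σ s * traceAlong b₀ Y σ t := by
  rw [traceAlong, sum_pinnedFuns_union b₀ hst, traceAlong, traceAlong, sum_mul_sum]
  refine sum_congr rfl fun g _ => sum_congr rfl fun h _ => ?_
  rw [prod_union hst]
  congr 1
  · exact prod_congr rfl fun i hi => by simp [hi, hs i hi]
  · exact prod_congr rfl fun i hi => by
      simp [disjoint_right.mp hst hi, disjoint_right.mp hst (ht i hi)]

theorem traceAlong_biUnion {σ : α → α} (F : Finset ι) (B : ι → Finset α)
    (hB : (F : Set ι).PairwiseDisjoint B) (hσ : ∀ j ∈ F, ∀ i ∈ B j, σ i ∈ B j) :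
    traceAlong b₀ Y σ (F.biUnion B) = ∏ j ∈ F, traceAlong b₀ Y σ (B j) := by
  classical
  induction F using Finset.induction_on with
  | empty => simp [traceAlong_empty]
  | insert j F hj ih =>
    have hB' : (F : Set ι).PairwiseDisjoint B := hB.subset (by simp)
    rw [biUnion_insert, prod_insert hj, traceAlong_union,
      ih hB' fun j' hj' => hσ j' (by simp [hj'])]
    · exact (disjoint_biUnion_right _ _ _).mpr fun j' hj' =>
        hB (by simp) (by simp [hj']) fun h => hj (h ▸ hj')
    · exact hσ j (mem_insert_self j F)
    · simp only [mem_biUnion]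
      rintro i ⟨j', hj', hi⟩
      exact ⟨j', hj', hσ j' (by simp [hj']) i hi⟩

theorem traceAlong_map [Fintype ι] [DecidableEq ι] (e : ι ↪ α) (σ : α → α) (τ : ι → ι)
    (h : ∀ k, σ (e k) = e (τ k)) :
    traceAlong b₀ Y σ (univ.map e) = ∑ g : ι → β, ∏ k, Y (e k) (g k) (g (τ k)) := by
  refine sum_nbij' (fun f => f ∘ e) (fun g => Function.extend e g fun _ => b₀) (by simp)
    (fun g _ => ?_) (fun f hf => ?_) (fun g _ => ?_) (fun f _ => ?_)
  · simp only [mem_pinnedFuns, mem_map, mem_univ, true_and]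
    exact fun i hi => Function.extend_apply' _ _ _ hi
  · ext i
    by_cases hi : ∃ k, e k = i
    · obtain ⟨k, rfl⟩ := hi
      simp [e.injective.extend_apply]
    · simp_all
  · exact Function.extend_comp e.injective _ _
  · simp [h]

theorem traceAlong_of_isCycleOn {σ : Equiv.Perm α} {s : Finset α} (hσ : σ.IsCycleOn s)
    {x : α} (hx : x ∈ s) :
    traceAlong b₀ Y σ s = Matrix.trace ((List.range #s).map fun k => Y ((σ ^ k) x)).prod := by
  obtain ⟨d, hd⟩ : ∃ d, #s = d + 1 := Nat.exists_eq_add_one_of_ne_zero (card_ne_zero_of_mem hx)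
  let e : Fin (d + 1) ↪ α := ⟨fun k => (σ ^ (k : ℕ)) x, fun k l hkl => Fin.ext <| by
    have := (hσ.pow_apply_eq_pow_apply hx).mp hkl
    rw [hd] at this
    exact Nat.ModEq.eq_of_lt_of_lt this k.2 l.2⟩
  have hs : univ.map e = s := eq_of_subset_of_card_le
    (fun i hi => by
      obtain ⟨k, -, rfl⟩ := mem_map.mp hi
      exact hσ.1.mapsTo.perm_pow _ hx) (by simp [hd])
  have he : ∀ k, σ (e k) = e (k + 1) := by
    intro k
    show σ ((σ ^ (k : ℕ)) x) = (σ ^ ((k + 1 : Fin (d + 1)) : ℕ)) x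
    rw [← Equiv.Perm.mul_apply, ← pow_succ', hσ.pow_apply_eq_pow_apply hx, hd, Fin.val_add_one]
    split_ifs with hk
    · simp [hk, Nat.ModEq]
    · rfl
  rw [hd, Matrix.trace_list_prod_map_range, ← hs, traceAlong_map b₀ Y e σ (· + 1) he]
  rfl

theorem traceAlong_eq_prod_trace {σ : Equiv.Perm α} {s : Finset α} (h : ∀ a ∈ s, σ a = a) :
    traceAlong b₀ Y σ s = ∏ a ∈ s, Matrix.trace (Y a) := by
  calc traceAlong b₀ Y σ s = traceAlong b₀ Y σ (s.biUnion singleton) := by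
        rw [biUnion_singleton_eq_self]
    _ = ∏ a ∈ s, Matrix.trace (Y a) := by
      rw [traceAlong_biUnion b₀ Y s _ (fun a _ b _ hab => disjoint_singleton.mpr hab)
        fun a ha i hi => by rw [mem_singleton.mp hi, h a ha]; exact mem_singleton_self a]
      refine prod_congr rfl fun a ha => ?_
      have hcycle : σ.IsCycleOn ({a} : Finset α) := by
        rw [coe_singleton, Equiv.Perm.isCycleOn_singleton]
        exact h a ha
      simpa using traceAlong_of_isCycleOn b₀ Y hcycle (mem_singleton_self a)

end

theorem sum_sign_smul_prod_eq_zero_of_not_injective {α β : Type*} [Fintype α] [DecidableEq α]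
    (Y : α → Matrix β β R) {f : α → β} (hf : ¬ f.Injective) :
    ∑ π : Equiv.Perm α, (Equiv.Perm.sign π : ℤ) • ∏ i, Y i (f i) (f (π i)) = 0 := by
  obtain ⟨a, b, hfab, hab⟩ : ∃ a b, f a = f b ∧ a ≠ b := by
    simpa [Function.Injective] using hf
  have := Matrix.det_zero_of_row_eq (M := Matrix.of fun i j => Y j (f j) (f i)) hab
    (by ext j; simp [hfab])
  simpa [Matrix.det_apply, Units.smul_def] using this

theorem cycleTrace_eq_traceAlong (b₀ : Fin n) (Y : Fin (n + 1) → Matrix (Fin n) (Fin n) R)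
    {π c : Equiv.Perm (Fin (n + 1))} (hc : c ∈ π.cycleFactorsFinset) :
    cycleTrace c Y = traceAlong b₀ Y π c.support := by
  obtain ⟨hcycle, hcπ⟩ := Equiv.Perm.mem_cycleFactorsFinset_iff.mp hc
  have hne := hcycle.nonempty_support
  have hcycleOn : c.IsCycleOn c.support := by
    rw [Equiv.Perm.coe_support_eq_set_support]
    exact hcycle.isCycleOn
  rw [cycleTrace, dif_pos hne, ← traceAlong_congr b₀ Y hcπ,
    traceAlong_of_isCycleOn b₀ Y hcycleOn (min'_mem _ hne)]

theorem trPow_eq_sum (b₀ : Fin n) (π : Equiv.Perm (Fin (n + 1)))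
    (Y : Fin (n + 1) → Matrix (Fin n) (Fin n) R) :
    trPow π Y = ∑ f : Fin (n + 1) → Fin n, ∏ i, Y i (f i) (f (π i)) := by
  have hsupport : π.cycleFactorsFinset.biUnion Equiv.Perm.support = π.support := by
    ext i
    rw [mem_biUnion, Equiv.Perm.mem_support_iff_mem_support_of_mem_cycleFactorsFinset]
  have hcycles : ∏ c ∈ π.cycleFactorsFinset, cycleTrace c Y = traceAlong b₀ Y π π.support := by
    rw [← hsupport, traceAlong_biUnion]
    · exact prod_congr rfl fun c hc => cycleTrace_eq_traceAlong b₀ Y hc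
    · exact π.cycleFactorsFinset_pairwise_disjoint.mono' fun _ _ =>
        Equiv.Perm.Disjoint.disjoint_support
    · intro c hc i hi
      rw [← (Equiv.Perm.mem_cycleFactorsFinset_iff.mp hc).2 i hi]
      exact Equiv.Perm.apply_mem_support.mpr hi
  have hfixed : ∀ i ∈ π.supportᶜ, π i = i := fun i hi =>
    Equiv.Perm.notMem_support.mp (mem_compl.mp hi)
  rw [trPow, hcycles, ← traceAlong_eq_prod_trace b₀ Y hfixed,
    ← traceAlong_union b₀ Y disjoint_compl_right (fun i => Equiv.Perm.apply_mem_support.mpr)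
      (by simp), union_compl, traceAlong_univ]

/-- The fundamental trace identity of `n × n` matrices: for any
`n × n` matrices `Y 1, …, Y (n+1)` over any commutative ring,
`Σ_{π ∈ S_{n+1}} sign(π) · Tr^π = 0`. -/
theorem fundamental_trace_identity (Y : Fin (n + 1) → Matrix (Fin n) (Fin n) R) :
    ∑ π : Equiv.Perm (Fin (n + 1)), (Equiv.Perm.sign π : ℤ) • trPow π Y = 0 := by
  cases n with
  | zero =>
    refine sum_eq_zero fun π _ => ?_
    obtain rfl : π = 1 := Equiv.ext fun i => Subsingleton.elim (α := Fin 1) _ _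
    simp [trPow]
  | succ n =>
    simp_rw [trPow_eq_sum 0, smul_sum]
    rw [sum_comm]
    exact sum_eq_zero fun f _ => sum_sign_smul_prod_eq_zero_of_not_injective Y fun hf => by
      simpa using Fintype.card_le_of_injective f hf

end
end

section
/- The invariant algebra R^{S_4} is generated as a K-algebra by the ten elements [x], [x²], [x³], [z²], [z⁴], [z⁶], [xz²], [x²z²], [xz⁴], and z_1z_2z_3. -/
noncomputable section

open MvPolynomial

/-- The set of two-element subsets of `{1,2,3,4}` (modelled as non-diagonal unordered
pairs of elements of `Fin 4`), indexing the variables of the polynomial ring `R`. -/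
abbrev PairIdx : Type := {p : Sym2 (Fin 4) // ¬ p.IsDiag}

/-- The two-element subset `{i, j}`. -/
def pr (i j : Fin 4) (h : i ≠ j) : PairIdx := ⟨s(i, j), by simp [Sym2.mk_isDiag_iff, h]⟩

/-- The permutation of two-element subsets induced by a permutation `σ` of `{1,2,3,4}`. -/
def pairPerm (σ : Equiv.Perm (Fin 4)) : Equiv.Perm PairIdx :=
  Equiv.subtypeEquiv
    { toFun := Sym2.map σ
      invFun := Sym2.map σ.symm
      left_inv := fun p => by
        rw [show Sym2.map σ.symm (Sym2.map σ p) = Sym2.map (σ.symm ∘ σ) p by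
          rw [Sym2.map_comp]; rfl]
        simp
      right_inv := fun p => by
        rw [show Sym2.map σ (Sym2.map σ.symm p) = Sym2.map (σ ∘ σ.symm) p by
          rw [Sym2.map_comp]; rfl]
        simp }
    (fun p => not_congr (Sym2.isDiag_map σ.injective).symm)

variable (K : Type*) [Field K]

/-- `R := K[x_{{i,j}}]`, the six-variable polynomial ring on the variables indexed by
the two-element subsets of `{1,2,3,4}`. -/
abbrev R4 : Type _ := MvPolynomial PairIdx K

/-- The action of `σ ∈ S₄` on `R`, `σ · x_{{i,j}} = x_{{σ(i),σ(j)}}`, as a `K`-algebra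
homomorphism. -/
def actS4 (σ : Equiv.Perm (Fin 4)) : R4 K →ₐ[K] R4 K := rename (pairPerm σ)

/-- The invariant subalgebra `R^{S₄}`. -/
def S4Inv : Subalgebra K (R4 K) :=
  ⨅ σ : Equiv.Perm (Fin 4), AlgHom.equalizer (actS4 K σ) (AlgHom.id K (R4 K))

/-- `x₁ = x_{{1,2}} + x_{{3,4}}`, `x₂ = x_{{1,3}} + x_{{2,4}}`, `x₃ = x_{{1,4}} + x_{{2,3}}`
(vertices renamed `1,2,3,4 → 0,1,2,3`). -/
def xg : Fin 3 → R4 K :=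
  ![X (pr 0 1 (by decide)) + X (pr 2 3 (by decide)),
    X (pr 0 2 (by decide)) + X (pr 1 3 (by decide)),
    X (pr 0 3 (by decide)) + X (pr 1 2 (by decide))]

/-- `z₁ = x_{{1,2}} − x_{{3,4}}`, `z₂ = x_{{1,3}} − x_{{2,4}}`, `z₃ = x_{{1,4}} − x_{{2,3}}`. -/
def zg : Fin 3 → R4 K :=
  ![X (pr 0 1 (by decide)) - X (pr 2 3 (by decide)),
    X (pr 0 2 (by decide)) - X (pr 1 3 (by decide)),
    X (pr 0 3 (by decide)) - X (pr 1 2 (by decide))]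

/-- `[x^a z^{2b}] := Σ_{i=1}^{3} x_i^a z_i^{2b}`. -/
def pSum (a b : ℕ) : R4 K := ∑ i : Fin 3, xg K i ^ a * zg K i ^ (2 * b)

/-!
When `2 ≠ 0` the elements `x_i, z_i` are coordinates on `R`, and in these coordinates
`S₄ = V ⋊ S₃` acts by signed permutations of the three pairs `(x_i, z_i)`: the Klein group `V`
negates two of the `z_i`, and the stabiliser `S₃` of a vertex permutes the indices. Averaging
a monomial over `V` kills it unless all its `z`-exponents have the same parity, leaving
`∏ x_i^{a_i} z_i^{2b_i}`, possibly times `z₁z₂z₃`; averaging this over `S₃` gives a polynomial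
in the power sums `[x^a z^{2b}]`. Newton's identities for the `x_i` and for the `z_i²` reduce
every power sum to those with `a, b ≤ 2`, and `6 [x²z⁴]` is a polynomial in the others.
-/

open Equiv

section

variable {K}

theorem six_ne_zero_of_ringChar (hchar : ringChar K = 0 ∨ 3 < ringChar K) : (6 : K) ≠ 0 := by
  have hp (p : ℕ) (hp0 : 0 < p) (hp3 : p ≤ 3) : (p : K) ≠ 0 := fun hpK => by
    have hdvd := (ringChar.spec K p).1 hpK
    rcases hchar with h | h
    · rw [h, zero_dvd_iff] at hdvd
      omega
    · exact absurd (Nat.le_of_dvd hp0 hdvd) (by omega)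
  rw [show (6 : K) = (2 : ℕ) * (3 : ℕ) by norm_num]
  exact mul_ne_zero (hp 2 (by norm_num) (by norm_num)) (hp 3 (by norm_num) (by norm_num))

end

section PowerSums

variable {K} {A : Type*} [CommRing A] [Algebra K A]

def powerSum (u w : Fin 3 → A) (a b : ℕ) : A := ∑ i, u i ^ a * w i ^ b

theorem powerSum_comm (u w : Fin 3 → A) (a b : ℕ) : powerSum u w a b = powerSum w u b a := by
  simp only [powerSum, mul_comm]

theorem powerSum_add_three (u w : Fin 3 → A) (a b : ℕ) :
    powerSum u w (a + 3) b = (u 0 + u 1 + u 2) * powerSum u w (a + 2) b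
      - (u 0 * u 1 + u 0 * u 2 + u 1 * u 2) * powerSum u w (a + 1) b
      + u 0 * u 1 * u 2 * powerSum u w a b := by
  simp only [powerSum, Fin.sum_univ_three]
  ring

theorem Subalgebra.mem_of_algebraMap_mul_mem {S : Subalgebra K A} {c : K} (hc : c ≠ 0) {x : A}
    (h : algebraMap K A c * x ∈ S) : x ∈ S := by
  rw [← one_mul x, ← map_one (algebraMap K A), ← inv_mul_cancel₀ hc, map_mul, mul_assoc]
  exact mul_mem (S.algebraMap_mem _) h

variable {S : Subalgebra K A}

theorem esymm_two_three_mem (h6 : (6 : K) ≠ 0) (y w : Fin 3 → A)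
    (h1 : powerSum y w 1 0 ∈ S) (h2 : powerSum y w 2 0 ∈ S) (h3 : powerSum y w 3 0 ∈ S) :
    y 0 * y 1 + y 0 * y 2 + y 1 * y 2 ∈ S ∧ y 0 * y 1 * y 2 ∈ S := by
  have two : (2 : K) ≠ 0 := fun h => h6 (by linear_combination 3 * h)
  constructor
  · refine S.mem_of_algebraMap_mul_mem two ?_
    rw [map_ofNat, show 2 * (y 0 * y 1 + y 0 * y 2 + y 1 * y 2) =
        powerSum y w 1 0 ^ 2 - powerSum y w 2 0 by
      simp only [powerSum, Fin.sum_univ_three]; ring]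
    aesop
  · refine S.mem_of_algebraMap_mul_mem h6 ?_
    rw [map_ofNat, show 6 * (y 0 * y 1 * y 2) = powerSum y w 1 0 ^ 3
        - 3 * powerSum y w 1 0 * powerSum y w 2 0 + 2 * powerSum y w 3 0 by
      simp only [powerSum, Fin.sum_univ_three]; ring]
    aesop

theorem powerSum_add_three_mem (h6 : (6 : K) ≠ 0) (u w : Fin 3 → A) (a b : ℕ)
    (h1 : powerSum u w 1 0 ∈ S) (h2 : powerSum u w 2 0 ∈ S) (h3 : powerSum u w 3 0 ∈ S)
    (ha : powerSum u w a b ∈ S) (ha1 : powerSum u w (a + 1) b ∈ S)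
    (ha2 : powerSum u w (a + 2) b ∈ S) : powerSum u w (a + 3) b ∈ S := by
  obtain ⟨he2, he3⟩ := esymm_two_three_mem h6 u w h1 h2 h3
  have he1 : u 0 + u 1 + u 2 ∈ S := by simpa [powerSum, Fin.sum_univ_three] using h1
  rw [powerSum_add_three]
  aesop

variable (u w : Fin 3 → A)

def lowPowerSums : Set A :=
  {powerSum u w 1 0, powerSum u w 2 0, powerSum u w 3 0, powerSum u w 0 1, powerSum u w 0 2,
    powerSum u w 0 3, powerSum u w 1 1, powerSum u w 2 1, powerSum u w 1 2}

theorem powerSum_mem_of_lowPowerSums_subset (h6 : (6 : K) ≠ 0) (hS : lowPowerSums u w ⊆ S) :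
    ∀ a b, powerSum u w a b ∈ S
  | a + 3, b => powerSum_add_three_mem h6 u w a b (hS (by simp [lowPowerSums]))
      (hS (by simp [lowPowerSums])) (hS (by simp [lowPowerSums]))
      (powerSum_mem_of_lowPowerSums_subset h6 hS a b)
      (powerSum_mem_of_lowPowerSums_subset h6 hS (a + 1) b)
      (powerSum_mem_of_lowPowerSums_subset h6 hS (a + 2) b)
  | a, b + 3 => by
      have step := powerSum_add_three_mem (S := S) h6 w u b a
      simp only [← powerSum_comm u w] at step
      exact step (hS (by simp [lowPowerSums])) (hS (by simp [lowPowerSums]))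
        (hS (by simp [lowPowerSums])) (powerSum_mem_of_lowPowerSums_subset h6 hS a b)
        (powerSum_mem_of_lowPowerSums_subset h6 hS a (b + 1))
        (powerSum_mem_of_lowPowerSums_subset h6 hS a (b + 2))
  | 0, 0 => by
      rw [show powerSum u w 0 0 = 3 by simp [powerSum]]
      exact ofNat_mem S 3
  | 1, 0 | 2, 0 | 0, 1 | 0, 2 | 1, 1 | 2, 1 | 1, 2 => hS (by simp [lowPowerSums])
  | 2, 2 => by
      simp only [lowPowerSums, Set.insert_subset_iff, Set.singleton_subset_iff,
        SetLike.mem_coe] at hS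
      refine S.mem_of_algebraMap_mul_mem h6 ?_
      rw [map_ofNat, show 6 * powerSum u w 2 2 = 2 * powerSum u w 1 1 ^ 2
          + 4 * powerSum u w 1 0 * powerSum u w 1 2 + 4 * powerSum u w 2 1 * powerSum u w 0 1
          + powerSum u w 2 0 * powerSum u w 0 2 - powerSum u w 2 0 * powerSum u w 0 1 ^ 2
          - powerSum u w 1 0 ^ 2 * powerSum u w 0 2
          - 4 * powerSum u w 1 0 * powerSum u w 0 1 * powerSum u w 1 1
          + powerSum u w 1 0 ^ 2 * powerSum u w 0 1 ^ 2 by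
        simp only [powerSum, Fin.sum_univ_three]; ring]
      aesop
termination_by a b => a + b

end PowerSums

section Symmetrization

variable {A : Type*} [CommRing A]

theorem univ_perm_fin_three : (Finset.univ : Finset (Perm (Fin 3))) =
    {1, swap 0 1, swap 0 2, swap 1 2, swap 0 1 * swap 1 2, swap 1 2 * swap 0 1} := by
  decide

theorem sum_perm_prod_pow (u w : Fin 3 → A) (a b : Fin 3 → ℕ) :
    ∑ π : Perm (Fin 3), ∏ i, u (π i) ^ a i * w (π i) ^ b i =
      powerSum u w (a 0) (b 0) * powerSum u w (a 1) (b 1) * powerSum u w (a 2) (b 2)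
      - powerSum u w (a 0 + a 1) (b 0 + b 1) * powerSum u w (a 2) (b 2)
      - powerSum u w (a 0 + a 2) (b 0 + b 2) * powerSum u w (a 1) (b 1)
      - powerSum u w (a 1 + a 2) (b 1 + b 2) * powerSum u w (a 0) (b 0)
      + 2 * powerSum u w (a 0 + a 1 + a 2) (b 0 + b 1 + b 2) := by
  rw [univ_perm_fin_three]
  simp (disch := decide) only [Finset.sum_insert, Finset.sum_singleton]
  simp only [Perm.coe_one, id_eq, Perm.coe_mul, Function.comp_apply, swap_apply_def,
    Fin.reduceEq, reduceIte, Fin.prod_univ_three, powerSum, Fin.sum_univ_three, pow_add]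
  ring

theorem sum_perm_prod_pow_mem {R : Type*} [CommRing R] [Algebra R A] {S : Subalgebra R A}
    {u w : Fin 3 → A} (hS : ∀ a b, powerSum u w a b ∈ S) (a b : Fin 3 → ℕ) :
    ∑ π : Perm (Fin 3), ∏ i, u (π i) ^ a i * w (π i) ^ b i ∈ S := by
  rw [sum_perm_prod_pow]
  aesop

theorem one_add_neg_one_pow_add (b : Fin 3 → ℕ) :
    (1 + (-1) ^ (b 1 + b 2) + (-1) ^ (b 0 + b 2) + (-1) ^ (b 0 + b 1) : A) =
      if b 0 % 2 = b 1 % 2 ∧ b 1 % 2 = b 2 % 2 then 4 else 0 := by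
  simp only [neg_one_pow_eq_pow_mod_two (R := A) (n := _ + _), Nat.add_mod (b _)]
  rcases Nat.mod_two_eq_zero_or_one (b 0) with h0 | h0 <;>
    rcases Nat.mod_two_eq_zero_or_one (b 1) with h1 | h1 <;>
    rcases Nat.mod_two_eq_zero_or_one (b 2) with h2 | h2 <;>
    simp [h0, h1, h2] <;> norm_num

end Symmetrization

section KleinDecomposition

def posPair : Fin 3 → PairIdx := ![pr 0 1 (by decide), pr 0 2 (by decide), pr 0 3 (by decide)]

def negPair : Fin 3 → PairIdx := ![pr 2 3 (by decide), pr 1 3 (by decide), pr 1 2 (by decide)]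

/-- The permutation of `{0, 1, 2, 3}` fixing `0` and acting on `{1, 2, 3}` as `π`. -/
def permSucc (π : Perm (Fin 3)) : Perm (Fin 4) := Perm.decomposeFin.symm (0, π)

def klein : Fin 3 → Perm (Fin 4) := ![swap 0 1 * swap 2 3, swap 0 2 * swap 1 3, swap 0 3 * swap 1 2]

theorem pairPerm_permSucc_posPair (π : Perm (Fin 3)) (i : Fin 3) :
    pairPerm (permSucc π) (posPair i) = posPair (π i) := by
  revert π i; decide

theorem pairPerm_permSucc_negPair (π : Perm (Fin 3)) (i : Fin 3) :
    pairPerm (permSucc π) (negPair i) = negPair (π i) := by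
  revert π i; decide

theorem pairPerm_klein_posPair (j i : Fin 3) :
    pairPerm (klein j) (posPair i) = if i = j then posPair i else negPair i := by
  revert j i; decide

theorem pairPerm_klein_negPair (j i : Fin 3) :
    pairPerm (klein j) (negPair i) = if i = j then negPair i else posPair i := by
  revert j i; decide

theorem exists_eq_permSucc_mul_klein (σ : Perm (Fin 4)) :
    ∃ π, σ = permSucc π ∨ ∃ j, σ = permSucc π * klein j := by
  revert σ; decide

theorem exists_eq_posPair_or_negPair (p : PairIdx) : ∃ i, p = posPair i ∨ p = negPair i := by
  revert p; decide

theorem pairPerm_mul (σ τ : Perm (Fin 4)) : pairPerm (σ * τ) = pairPerm σ * pairPerm τ :=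
  Equiv.ext fun p => Subtype.ext (Sym2.map_map (g := σ) (f := τ) p.1).symm

variable {K}

theorem xg_eq (i : Fin 3) : xg K i = X (posPair i) + X (negPair i) := by fin_cases i <;> rfl

theorem zg_eq (i : Fin 3) : zg K i = X (posPair i) - X (negPair i) := by fin_cases i <;> rfl

theorem actS4_X (σ : Perm (Fin 4)) (p : PairIdx) : actS4 K σ (X p) = X (pairPerm σ p) :=
  rename_X _ _

theorem actS4_mul (σ τ : Perm (Fin 4)) : actS4 K (σ * τ) = (actS4 K σ).comp (actS4 K τ) := by
  simp only [actS4, pairPerm_mul, Perm.coe_mul, ← rename_comp_rename]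

theorem mem_S4Inv {f : R4 K} : f ∈ S4Inv K ↔ ∀ σ, actS4 K σ f = f := by
  simp [S4Inv, Algebra.mem_iInf, AlgHom.mem_equalizer]

theorem mem_S4Inv_of_forall {f : R4 K} (hperm : ∀ π, actS4 K (permSucc π) f = f)
    (hklein : ∀ j, actS4 K (klein j) f = f) : f ∈ S4Inv K := by
  refine mem_S4Inv.2 fun σ => ?_
  obtain ⟨π, rfl | ⟨j, rfl⟩⟩ := exists_eq_permSucc_mul_klein σ
  · exact hperm π
  · rw [actS4_mul, AlgHom.comp_apply, hklein, hperm]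

end KleinDecomposition

section Coordinates

abbrev XZPoly : Type _ := MvPolynomial (Fin 3 ⊕ Fin 3) K

def xvar (i : Fin 3) : XZPoly K := X (.inl i)

def zvar (i : Fin 3) : XZPoly K := X (.inr i)

def evalXZ : XZPoly K →ₐ[K] R4 K := aeval (Sum.elim (xg K) (zg K))

def permXZ (π : Perm (Fin 3)) : XZPoly K →ₐ[K] XZPoly K := rename (Sum.map π π)

def flipZ (j : Fin 3) : XZPoly K →ₐ[K] XZPoly K :=
  aeval (Sum.elim (xvar K) fun i => if i = j then zvar K i else -zvar K i)

variable {K}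

@[simp]
theorem evalXZ_xvar (i : Fin 3) : evalXZ K (xvar K i) = xg K i := aeval_X _ _

@[simp]
theorem evalXZ_zvar (i : Fin 3) : evalXZ K (zvar K i) = zg K i := aeval_X _ _

@[simp]
theorem permXZ_xvar (π : Perm (Fin 3)) (i : Fin 3) : permXZ K π (xvar K i) = xvar K (π i) :=
  rename_X _ _

@[simp]
theorem permXZ_zvar (π : Perm (Fin 3)) (i : Fin 3) : permXZ K π (zvar K i) = zvar K (π i) :=
  rename_X _ _

@[simp]
theorem flipZ_xvar (j i : Fin 3) : flipZ K j (xvar K i) = xvar K i := aeval_X _ _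

@[simp]
theorem flipZ_zvar (j i : Fin 3) :
    flipZ K j (zvar K i) = if i = j then zvar K i else -zvar K i := aeval_X _ _

theorem actS4_permSucc_comp_evalXZ (π : Perm (Fin 3)) :
    (actS4 K (permSucc π)).comp (evalXZ K) = (evalXZ K).comp (permXZ K π) := by
  ext (i | i) <;>
    simp [evalXZ, permXZ, xg_eq, zg_eq, actS4_X, pairPerm_permSucc_posPair,
      pairPerm_permSucc_negPair]

theorem actS4_klein_comp_evalXZ (j : Fin 3) :
    (actS4 K (klein j)).comp (evalXZ K) = (evalXZ K).comp (flipZ K j) := by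
  ext (i | i) <;> by_cases h : i = j <;>
    simp [evalXZ, flipZ, xvar, zvar, xg_eq, zg_eq, actS4_X, pairPerm_klein_posPair,
      pairPerm_klein_negPair, h, add_comm]

theorem evalXZ_surjective (h2 : (2 : K) ≠ 0) : Function.Surjective (evalXZ K) := by
  rw [← AlgHom.range_eq_top, eq_top_iff, ← adjoin_range_X, Algebra.adjoin_le_iff]
  rintro _ ⟨p, rfl⟩
  obtain ⟨i, rfl | rfl⟩ := exists_eq_posPair_or_negPair p
  · refine ⟨(2 : K)⁻¹ • (xvar K i + zvar K i), ?_⟩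
    change evalXZ K _ = _
    rw [map_smul, map_add, evalXZ_xvar, evalXZ_zvar, xg_eq, zg_eq, add_add_sub_cancel,
      ← two_smul K, smul_smul, inv_mul_cancel₀ h2, one_smul]
  · refine ⟨(2 : K)⁻¹ • (xvar K i - zvar K i), ?_⟩
    change evalXZ K _ = _
    rw [map_smul, map_sub, evalXZ_xvar, evalXZ_zvar, xg_eq, zg_eq, add_sub_sub_cancel,
      ← two_smul K, smul_smul, inv_mul_cancel₀ h2, one_smul]

end Coordinates

section Averaging

def kleinSum : XZPoly K →ₗ[K] XZPoly K := LinearMap.id + ∑ j, (flipZ K j).toLinearMap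

def symSum : XZPoly K →ₗ[K] XZPoly K := ∑ π, (permXZ K π).toLinearMap

def xzInvariants : Set (XZPoly K) :=
  insert (∏ i, zvar K i) (Set.range (Function.uncurry (powerSum (xvar K) (zvar K ^ 2))))

variable {K}

theorem evalXZ_symSum_kleinSum {F : XZPoly K} (hF : evalXZ K F ∈ S4Inv K) :
    evalXZ K (symSum K (kleinSum K F)) = 24 * evalXZ K F := by
  rw [mem_S4Inv] at hF
  have hperm (π) (G : XZPoly K) : evalXZ K (permXZ K π G) = actS4 K (permSucc π) (evalXZ K G) :=
    (DFunLike.congr_fun (actS4_permSucc_comp_evalXZ π) G).symm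
  have hklein (j) (G : XZPoly K) : evalXZ K (flipZ K j G) = actS4 K (klein j) (evalXZ K G) :=
    (DFunLike.congr_fun (actS4_klein_comp_evalXZ j) G).symm
  calc evalXZ K (symSum K (kleinSum K F))
      = ∑ _π : Perm (Fin 3), (evalXZ K F + ∑ _j : Fin 3, evalXZ K F) := by
        simp [symSum, kleinSum, hperm, hklein, hF]
    _ = 24 * evalXZ K F := by
        simp only [Finset.sum_const, Finset.card_univ, Fintype.card_perm, Fintype.card_fin,
          Nat.factorial, nsmul_eq_mul]
        push_cast
        ring

theorem monomial_one_eq (m : Fin 3 ⊕ Fin 3 →₀ ℕ) :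
    (monomial m 1 : XZPoly K) = ∏ i, xvar K i ^ m (.inl i) * zvar K i ^ m (.inr i) := by
  rw [monomial_eq, C_1, one_mul, Finsupp.prod_fintype _ _ fun _ => pow_zero _,
    Fintype.prod_sum_type, Finset.prod_mul_distrib]
  rfl

theorem kleinSum_prod (a b : Fin 3 → ℕ) :
    kleinSum K (∏ i, xvar K i ^ a i * zvar K i ^ b i) =
      (1 + (-1) ^ (b 1 + b 2) + (-1) ^ (b 0 + b 2) + (-1) ^ (b 0 + b 1)) *
        ∏ i, xvar K i ^ a i * zvar K i ^ b i := by
  simp only [kleinSum, LinearMap.add_apply, LinearMap.id_apply, AlgHom.toLinearMap_apply,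
    Fin.sum_univ_three, Fin.prod_univ_three, map_mul, map_pow, flipZ_xvar, flipZ_zvar, Fin.reduceEq,
    reduceIte]
  rw [neg_pow (zvar K 0), neg_pow (zvar K 1), neg_pow (zvar K 2)]
  ring

theorem symSum_prod (a b : Fin 3 → ℕ) :
    symSum K (∏ i, xvar K i ^ a i * (zvar K ^ 2) i ^ b i) =
      ∑ π : Perm (Fin 3), ∏ i, xvar K (π i) ^ a i * (zvar K ^ 2) (π i) ^ b i := by
  simp [symSum]

theorem symSum_mul_of_forall_permXZ_eq {H : XZPoly K} (hH : ∀ π, permXZ K π H = H)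
    (G : XZPoly K) : symSum K (H * G) = H * symSum K G := by
  simp [symSum, hH, Finset.mul_sum]

theorem permXZ_prod_zvar (π : Perm (Fin 3)) : permXZ K π (∏ i, zvar K i) = ∏ i, zvar K i := by
  rw [map_prod]
  simp only [permXZ_zvar]
  exact Equiv.prod_comp π (zvar K)

theorem flipZ_prod_zvar (j : Fin 3) : flipZ K j (∏ i, zvar K i) = ∏ i, zvar K i := by
  fin_cases j <;> simp [Fin.prod_univ_three]

theorem permXZ_powerSum (π : Perm (Fin 3)) (a b : ℕ) :
    permXZ K π (powerSum (xvar K) (zvar K ^ 2) a b) = powerSum (xvar K) (zvar K ^ 2) a b := by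
  simp only [powerSum, map_sum, map_mul, map_pow, Pi.pow_apply, permXZ_xvar, permXZ_zvar]
  exact Equiv.sum_comp π fun i => xvar K i ^ a * (zvar K i ^ 2) ^ b

theorem flipZ_powerSum (j : Fin 3) (a b : ℕ) :
    flipZ K j (powerSum (xvar K) (zvar K ^ 2) a b) = powerSum (xvar K) (zvar K ^ 2) a b := by
  simp [powerSum, apply_ite (· ^ 2)]

theorem symSum_kleinSum_monomial_mem (m : Fin 3 ⊕ Fin 3 →₀ ℕ) :
    symSum K (kleinSum K (monomial m 1)) ∈ Algebra.adjoin K (xzInvariants K) := by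
  have hps (a b : ℕ) : powerSum (xvar K) (zvar K ^ 2) a b ∈ Algebra.adjoin K (xzInvariants K) :=
    Algebra.subset_adjoin (Set.mem_insert_of_mem _ ⟨(a, b), rfl⟩)
  have hz : ∏ i, zvar K i ∈ Algebra.adjoin K (xzInvariants K) :=
    Algebra.subset_adjoin (Set.mem_insert _ _)
  set a := fun i => m (.inl i)
  set b := fun i => m (.inr i)
  rw [monomial_one_eq, kleinSum_prod a b, one_add_neg_one_pow_add]
  split_ifs with hb
  swap
  · simp
  set r := b 0 % 2
  have hr : ∀ i, b i = 2 * (b i / 2) + r := by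
    intro i; match i with | 0 | 1 | 2 => omega
  have hprod : ∏ i, xvar K i ^ a i * zvar K i ^ b i =
      (∏ i, zvar K i) ^ r * ∏ i, xvar K i ^ a i * (zvar K ^ 2) i ^ (b i / 2) := by
    rw [← Finset.prod_pow, ← Finset.prod_mul_distrib]
    refine Finset.prod_congr rfl fun i _ => ?_
    conv_lhs => rw [hr i]
    rw [pow_add, Pi.pow_apply, ← pow_mul]
    ring
  rw [hprod, ← mul_assoc, symSum_mul_of_forall_permXZ_eq fun π => by
      rw [map_mul, map_pow, permXZ_prod_zvar, map_ofNat],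
    symSum_prod]
  exact mul_mem (mul_mem (ofNat_mem _ 4) (pow_mem hz r)) (sum_perm_prod_pow_mem hps _ _)

theorem symSum_kleinSum_mem (F : XZPoly K) :
    symSum K (kleinSum K F) ∈ Algebra.adjoin K (xzInvariants K) := by
  induction F using MvPolynomial.induction_on' with
  | monomial m c =>
    rw [← mul_one c, ← smul_eq_mul, ← smul_monomial, map_smul, map_smul]
    exact Subalgebra.smul_mem _ (symSum_kleinSum_monomial_mem m) c
  | add p q hp hq =>
    rw [map_add, map_add]
    exact add_mem hp hq

theorem evalXZ_mem_S4Inv_of_mem {G : XZPoly K} (hG : G ∈ xzInvariants K) : evalXZ K G ∈ S4Inv K := by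
  refine mem_S4Inv_of_forall (fun π => ?_) (fun j => ?_)
  · rw [← AlgHom.comp_apply, actS4_permSucc_comp_evalXZ, AlgHom.comp_apply]
    rcases hG with rfl | ⟨⟨a, b⟩, rfl⟩
    exacts [congrArg _ (permXZ_prod_zvar π), congrArg _ (permXZ_powerSum π a b)]
  · rw [← AlgHom.comp_apply, actS4_klein_comp_evalXZ, AlgHom.comp_apply]
    rcases hG with rfl | ⟨⟨a, b⟩, rfl⟩
    exacts [congrArg _ (flipZ_prod_zvar j), congrArg _ (flipZ_powerSum j a b)]

theorem pSum_eq_powerSum (a b : ℕ) : pSum K a b = powerSum (xg K) (zg K ^ 2) a b := by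
  simp [pSum, powerSum, pow_mul]

theorem evalXZ_powerSum (a b : ℕ) :
    evalXZ K (powerSum (xvar K) (zvar K ^ 2) a b) = pSum K a b := by
  simp [powerSum, pSum, pow_mul]

theorem adjoin_ten_eq_map (h6 : (6 : K) ≠ 0) :
    Algebra.adjoin K
      {pSum K 1 0, pSum K 2 0, pSum K 3 0, pSum K 0 1, pSum K 0 2, pSum K 0 3,
        pSum K 1 1, pSum K 2 1, pSum K 1 2, zg K 0 * zg K 1 * zg K 2} =
      (Algebra.adjoin K (xzInvariants K)).map (evalXZ K) := by
  rw [AlgHom.map_adjoin]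
  apply le_antisymm
  · have hps (a b : ℕ) : pSum K a b ∈ Algebra.adjoin K (evalXZ K '' xzInvariants K) :=
      Algebra.subset_adjoin ⟨_, Set.mem_insert_of_mem _ ⟨(a, b), rfl⟩, evalXZ_powerSum a b⟩
    have hz : zg K 0 * zg K 1 * zg K 2 ∈ Algebra.adjoin K (evalXZ K '' xzInvariants K) :=
      Algebra.subset_adjoin ⟨_, Set.mem_insert _ _, by simp [Fin.prod_univ_three]⟩
    simp only [Algebra.adjoin_le_iff, Set.insert_subset_iff, Set.singleton_subset_iff,
      SetLike.mem_coe]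
    exact ⟨hps 1 0, hps 2 0, hps 3 0, hps 0 1, hps 0 2, hps 0 3, hps 1 1, hps 2 1, hps 1 2, hz⟩
  · rw [Algebra.adjoin_le_iff]
    rintro _ ⟨_, rfl | ⟨⟨a, b⟩, rfl⟩, rfl⟩
    · exact Algebra.subset_adjoin (by simp [Fin.prod_univ_three])
    · rw [Function.uncurry_apply_pair, evalXZ_powerSum, pSum_eq_powerSum a b]
      apply powerSum_mem_of_lowPowerSums_subset (xg K) (zg K ^ 2) h6
      simp only [lowPowerSums, ← pSum_eq_powerSum, Set.insert_subset_iff,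
        Set.singleton_subset_iff, SetLike.mem_coe]
      refine ⟨?_, ?_, ?_, ?_, ?_, ?_, ?_, ?_, ?_⟩ <;> exact Algebra.subset_adjoin (by simp)

end Averaging

/-- Let `K` be a field of characteristic `0` or `> 3`.  The invariant
algebra `R^{S₄}` is generated as a `K`-algebra by the ten elements
`[x], [x²], [x³], [z²], [z⁴], [z⁶], [xz²], [x²z²], [xz⁴], z₁z₂z₃`. -/
theorem S4Inv_generated_by_ten
    (hchar : ringChar K = 0 ∨ 3 < ringChar K) :
    Algebra.adjoin K
      {pSum K 1 0, pSum K 2 0, pSum K 3 0, pSum K 0 1, pSum K 0 2, pSum K 0 3,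
        pSum K 1 1, pSum K 2 1, pSum K 1 2, zg K 0 * zg K 1 * zg K 2}
      = S4Inv K := by
  have h6 := six_ne_zero_of_ringChar hchar
  have h2 : (2 : K) ≠ 0 := fun h => h6 (by linear_combination 3 * h)
  have h24 : (24 : K) ≠ 0 := by
    rw [show (24 : K) = 6 * 2 * 2 by norm_num]
    exact mul_ne_zero (mul_ne_zero h6 h2) h2
  rw [adjoin_ten_eq_map h6]
  apply le_antisymm
  · rw [AlgHom.map_adjoin, Algebra.adjoin_le_iff]
    rintro _ ⟨G, hG, rfl⟩
    exact evalXZ_mem_S4Inv_of_mem hG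
  · intro f hf
    obtain ⟨F, rfl⟩ := evalXZ_surjective h2 f
    refine Subalgebra.mem_of_algebraMap_mul_mem h24 ?_
    rw [map_ofNat, ← evalXZ_symSum_kleinSum hf]
    exact ⟨_, symSum_kleinSum_mem F, rfl⟩

end
end
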